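/- Every circuit of the matching graph of a picture in DC₁, when traversed starting from a node labeled a and alternating row and column edges, yields a label sequence in the language (a b d c)⁺; in particular every circuit has length divisible by 4. -/

import Mathlib

/-- The alphabet Δ₁ = {a, b, c, d}. -/
inductive Del : Type
  | a | b | c | d
deriving DecidableEq

/-- Row cancellation: pairs [a,b] and [c,d]. -/
def rowStep (w w' : List Del) : Prop :=
  ∃ (u v : List Del),
    (w = u ++ [Del.a, Del.b] ++ v ∨ w = u ++ [Del.c, Del.d] ++ v) ∧ w' = u ++ v

/-- The row Dyck language D^Row. -/
def DRow (w : List Del) : Prop := Relation.ReflTransGen rowStep w []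

/-- Column cancellation: pairs [a,c] and [b,d]. -/
def colStep (w w' : List Del) : Prop :=
  ∃ (u v : List Del),
    (w = u ++ [Del.a, Del.c] ++ v ∨ w = u ++ [Del.b, Del.d] ++ v) ∧ w' = u ++ v

/-- The column Dyck language D^Col. -/
def DCol (w : List Del) : Prop := Relation.ReflTransGen colStep w []

/-- Row i (of length n) of a picture. -/
def row (p : ℕ → ℕ → Del) (n i : ℕ) : List Del := (List.range n).map (p i)

/-- Column j (of length m) of a picture. -/
def col (p : ℕ → ℕ → Del) (m j : ℕ) : List Del :=
  (List.range m).map (fun i => p i j)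

/-- The Dyck crossword language DC₁: nonempty pictures all of whose rows
are in D^Row and all of whose columns are in D^Col. -/
def DC (m n : ℕ) (p : ℕ → ℕ → Del) : Prop :=
  1 ≤ m ∧ 1 ≤ n ∧ (∀ i < m, DRow (row p n i)) ∧ (∀ j < n, DCol (col p m j))

/-- Positions `j < j'` match in a row word: the letters form a row matching
pair ([a,b] or [c,d]) and the factor strictly between them is in D^Row. -/
def rowMatchW (w : List Del) (j j' : ℕ) : Prop :=
  j < j' ∧ j' < w.length ∧
    ((w[j]? = some Del.a ∧ w[j']? = some Del.b) ∨
      (w[j]? = some Del.c ∧ w[j']? = some Del.d)) ∧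
    DRow ((w.drop (j + 1)).take (j' - (j + 1)))

/-- Positions `i < i'` match in a column word: the letters form a column
matching pair ([a,c] or [b,d]) and the factor strictly between them is in
D^Col. -/
def colMatchW (w : List Del) (i i' : ℕ) : Prop :=
  i < i' ∧ i' < w.length ∧
    ((w[i]? = some Del.a ∧ w[i']? = some Del.c) ∨
      (w[i]? = some Del.b ∧ w[i']? = some Del.d)) ∧
    DCol ((w.drop (i + 1)).take (i' - (i + 1)))

/-- Row edge of the matching graph of picture `p` (of size m×n) between cells
`u` and `v`: same row, matched positions (in either order). -/
def rowEdge (p : ℕ → ℕ → Del) (n : ℕ) (u v : ℕ × ℕ) : Prop :=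
  u.1 = v.1 ∧ (rowMatchW (row p n u.1) u.2 v.2 ∨ rowMatchW (row p n u.1) v.2 u.2)

/-- Column edge of the matching graph between cells `u` and `v`. -/
def colEdge (p : ℕ → ℕ → Del) (m : ℕ) (u v : ℕ × ℕ) : Prop :=
  u.2 = v.2 ∧ (colMatchW (col p m u.2) u.1 v.1 ∨ colMatchW (col p m u.2) v.1 u.1)

/-- Adjacency in the matching graph. -/
def adj (p : ℕ → ℕ → Del) (m n : ℕ) (u v : ℕ × ℕ) : Prop :=
  rowEdge p n u v ∨ colEdge p m u v

/-! Row edges join the letter pairs a–b and c–d, column edges a–c and b–d, so along a circuit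
that starts at an `a` and alternates row and column edges the labels are forced, one step at a
time, to be a, b, d, c, a, b, d, c, …. The circuit closes up at its initial `a`, which this
sequence only revisits at multiples of 4. -/

namespace Del

def rowMate : Del → Del
  | a => b | b => a | c => d | d => c

def colMate : Del → Del
  | a => c | c => a | b => d | d => b

@[simp]
lemma rowMate_rowMate (x : Del) : x.rowMate.rowMate = x := by cases x <;> rfl

@[simp]
lemma colMate_colMate (x : Del) : x.colMate.colMate = x := by cases x <;> rfl

/-- The label reached after leaving a node along edge number `k` of an alternating circuit:
edges with even index are row edges, those with odd index column edges. -/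
def alternate (k : ℕ) (x : Del) : Del :=
  if k % 2 = 0 then x.rowMate else x.colMate

def abdc (k : ℕ) : Del :=
  match k % 4 with
  | 0 => a
  | 1 => b
  | 2 => d
  | _ => c

lemma abdc_eq_a_iff (k : ℕ) : abdc k = a ↔ k % 4 = 0 := by
  have hr : k % 4 < 4 := Nat.mod_lt k (by norm_num)
  unfold abdc
  interval_cases k % 4 <;> simp

lemma alternate_abdc (k : ℕ) : alternate k (abdc k) = abdc (k + 1) := by
  have hr : k % 4 < 4 := Nat.mod_lt k (by norm_num)
  have h2 : k % 2 = k % 4 % 2 := (Nat.mod_mod_of_dvd k (by norm_num)).symm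
  unfold alternate abdc
  rw [h2, Nat.add_mod]
  interval_cases k % 4 <;> rfl

lemma eq_abdc_of_alternate {x : ℕ → Del} {N : ℕ} (h0 : x 0 = a)
    (hstep : ∀ k < N, x (k + 1) = alternate k (x k)) : ∀ k ≤ N, x k = abdc k := by
  intro k hk
  induction k with
  | zero => simpa [abdc] using h0
  | succ k ih => rw [hstep k hk, ih (by omega), alternate_abdc]

lemma map_range_abdc (t : ℕ) :
    (List.range (4 * t)).map abdc = (List.replicate t [a, b, d, c]).flatten := by
  induction t with
  | zero => rfl
  | succ t ih =>
    rw [Nat.mul_succ, List.range_add, List.map_append, ih, List.replicate_succ',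
      List.flatten_append, List.flatten_singleton, List.map_map]
    congr 1
    simp [List.range_succ, Nat.add_comm (4 * t), abdc]

end Del

open Del

lemma row_getElem?_eq_some {p : ℕ → ℕ → Del} {n i j : ℕ} {x : Del}
    (h : (row p n i)[j]? = some x) : p i j = x := by
  simp only [row, List.getElem?_map, Option.map_eq_some_iff, List.getElem?_eq_some_iff,
    List.getElem_range] at h
  grind

lemma col_getElem?_eq_some {p : ℕ → ℕ → Del} {m i j : ℕ} {x : Del}
    (h : (col p m j)[i]? = some x) : p i j = x := by
  simp only [col, List.getElem?_map, Option.map_eq_some_iff, List.getElem?_eq_some_iff,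
    List.getElem_range] at h
  grind

lemma rowMatchW.exists_rowMate {w : List Del} {j j' : ℕ} (h : rowMatchW w j j') :
    ∃ x, w[j]? = some x ∧ w[j']? = some x.rowMate := by
  obtain ⟨-, -, ⟨hj, hj'⟩ | ⟨hj, hj'⟩, -⟩ := h
  exacts [⟨a, hj, hj'⟩, ⟨c, hj, hj'⟩]

lemma colMatchW.exists_colMate {w : List Del} {i i' : ℕ} (h : colMatchW w i i') :
    ∃ x, w[i]? = some x ∧ w[i']? = some x.colMate := by
  obtain ⟨-, -, ⟨hi, hi'⟩ | ⟨hi, hi'⟩, -⟩ := h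
  exacts [⟨a, hi, hi'⟩, ⟨b, hi, hi'⟩]

lemma rowEdge.label_eq {p : ℕ → ℕ → Del} {n : ℕ} {u v : ℕ × ℕ} (h : rowEdge p n u v) :
    p v.1 v.2 = (p u.1 u.2).rowMate := by
  obtain ⟨hrow, hm | hm⟩ := h
  · obtain ⟨x, hx, hx'⟩ := hm.exists_rowMate
    rw [← hrow, row_getElem?_eq_some hx, row_getElem?_eq_some hx']
  · obtain ⟨x, hx, hx'⟩ := hm.exists_rowMate
    rw [← hrow, row_getElem?_eq_some hx, row_getElem?_eq_some hx', rowMate_rowMate]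

lemma colEdge.label_eq {p : ℕ → ℕ → Del} {m : ℕ} {u v : ℕ × ℕ} (h : colEdge p m u v) :
    p v.1 v.2 = (p u.1 u.2).colMate := by
  obtain ⟨hcol, hm | hm⟩ := h
  · obtain ⟨x, hx, hx'⟩ := hm.exists_colMate
    rw [← hcol, col_getElem?_eq_some hx, col_getElem?_eq_some hx']
  · obtain ⟨x, hx, hx'⟩ := hm.exists_colMate
    rw [← hcol, col_getElem?_eq_some hx, col_getElem?_eq_some hx', colMate_colMate]

theorem circuit_labels_abdc_general (m n : ℕ) (p : ℕ → ℕ → Del)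
    (L : List (ℕ × ℕ)) (hne : L ≠ [])
    (hstart : p (L.getD 0 (0, 0)).1 (L.getD 0 (0, 0)).2 = Del.a)
    (halt : ∀ k < L.length,
      if k % 2 = 0 then
        rowEdge p n (L.getD k (0, 0)) (L.getD ((k + 1) % L.length) (0, 0))
      else
        colEdge p m (L.getD k (0, 0)) (L.getD ((k + 1) % L.length) (0, 0))) :
    ∃ t : ℕ, 0 < t ∧ L.length = 4 * t ∧
      L.map (fun u => p u.1 u.2) =
        (List.replicate t [Del.a, Del.b, Del.d, Del.c]).flatten := by
  have hN : 0 < L.length := List.length_pos_iff.mpr hne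
  -- Indices are read modulo the length, so `label L.length` is the label of the start again.
  set label : ℕ → Del := fun k =>
    p (L.getD (k % L.length) (0, 0)).1 (L.getD (k % L.length) (0, 0)).2
  have hlabel : ∀ k ≤ L.length, label k = abdc k := by
    refine eq_abdc_of_alternate (by simpa [label] using hstart) fun k hk => ?_
    have hedge := halt k hk
    simp only [label, alternate, Nat.mod_eq_of_lt hk]
    split_ifs at hedge ⊢
    exacts [hedge.label_eq, hedge.label_eq]
  obtain ⟨t, ht⟩ : 4 ∣ L.length := by
    rw [Nat.dvd_iff_mod_eq_zero, ← abdc_eq_a_iff, ← hlabel _ le_rfl]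
    simpa [label] using hstart
  refine ⟨t, by omega, ht, ?_⟩
  rw [← map_range_abdc, ← ht]
  refine List.ext_getElem (by simp) fun k hk _ => ?_
  simp only [List.length_map] at hk
  simpa [label, Nat.mod_eq_of_lt hk, List.getD_eq_getElem?_getD, List.getElem?_eq_getElem hk]
    using hlabel k hk.le

/-- Traversing any circuit of the matching graph of a DC₁ picture, starting
from a node labeled `a` and alternating row and column edges, yields a label
sequence in (a b d c)⁺; in particular the circuit length is divisible by 4. -/
theorem circuit_labels_abdc (m n : ℕ) (p : ℕ → ℕ → Del) (h : DC m n p)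
    (L : List (ℕ × ℕ)) (hne : L ≠ []) (hnd : L.Nodup)
    (hstart : p (L.getD 0 (0, 0)).1 (L.getD 0 (0, 0)).2 = Del.a)
    (halt : ∀ k < L.length,
      if k % 2 = 0 then
        rowEdge p n (L.getD k (0, 0)) (L.getD ((k + 1) % L.length) (0, 0))
      else
        colEdge p m (L.getD k (0, 0)) (L.getD ((k + 1) % L.length) (0, 0))) :
    ∃ t : ℕ, 0 < t ∧ L.length = 4 * t ∧
      L.map (fun u => p u.1 u.2) =
        (List.replicate t [Del.a, Del.b, Del.d, Del.c]).flatten :=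
  circuit_labels_abdc_general m n p L hne hstart halt
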